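/- If G is the disjoint union of graphs G₁ and G₂, then γ_gr(G;C) = γ_gr(G₁; C ∩ V(G₁)) + γ_gr(G₂; C ∩ V(G₂)). -/
import Mathlib


/-- The neighborhood `N⟨v⟩`: closed neighborhood if `v ∈ C`, open neighborhood otherwise. -/
def gnbr {V : Type*} (G : SimpleGraph V) (C : Set V) (v : V) : Set V :=
  {u | G.Adj v u ∨ (v ∈ C ∧ u = v)}

/-- A legal sequence of `G;C`: distinct vertices, each element after the first
footprints a vertex not covered by the neighborhoods of its predecessors. -/
def Legal {V : Type*} (G : SimpleGraph V) (C : Set V) (l : List V) : Prop :=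
  l.Nodup ∧ ∀ i (hi : i < l.length), 0 < i →
    ((gnbr G C (l.get ⟨i, hi⟩)) \
      ⋃ j : Fin i, gnbr G C (l.get ⟨j, lt_trans j.2 hi⟩)).Nonempty

/-- A sequence is dominating if the neighborhoods of its vertices cover all of `V`. -/
def Dominating {V : Type*} (G : SimpleGraph V) (C : Set V) (l : List V) : Prop :=
  ∀ u, ∃ v ∈ l, u ∈ gnbr G C v

/-- The general Grundy domination number: maximum length of a legal sequence. -/
noncomputable def grundy {V : Type*} [Fintype V] (G : SimpleGraph V) (C : Set V) : ℕ :=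
  sSup {k | ∃ l : List V, Legal G C l ∧ l.length = k}

/-! ### Auxiliary machinery -/

/-- Recursive legality relative to an already-covered set `S`. -/
def LA {V : Type*} (G : SimpleGraph V) (C : Set V) : Set V → List V → Prop
  | _, [] => True
  | S, v :: l => (gnbr G C v \ S).Nonempty ∧ LA G C (S ∪ gnbr G C v) l

lemma LA_anti {V : Type*} {G : SimpleGraph V} {C : Set V} {S S' : Set V} (h : S' ⊆ S) :
    ∀ {l : List V}, LA G C S l → LA G C S' l := by
  intro l
  induction l generalizing S S' with
  | nil => intro; trivial
  | cons v t ih =>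
    rintro ⟨⟨u, hu1, hu2⟩, h2⟩
    exact ⟨⟨u, hu1, fun hc => hu2 (h hc)⟩, ih (Set.union_subset_union_left _ h) h2⟩

lemma iUnion_fin_succ {α : Type*} (k : ℕ) (f : Fin (k + 1) → Set α) :
    (⋃ j, f j) = f 0 ∪ ⋃ j : Fin k, f j.succ := by
  ext x; simp [Set.mem_iUnion, Fin.exists_fin_succ]

lemma union_shift {V : Type*} (G : SimpleGraph V) (C : Set V) (S : Set V) (v : V) (t : List V)
    (k : ℕ) (hk : k < t.length) (hi : k + 1 < (v :: t).length) :
    (S ∪ ⋃ j : Fin (k+1), gnbr G C ((v :: t).get ⟨j, lt_trans j.2 hi⟩))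
      = S ∪ gnbr G C v ∪ ⋃ j : Fin k, gnbr G C (t.get ⟨j, lt_trans j.2 hk⟩) := by
  rw [iUnion_fin_succ, ← Set.union_assoc]
  rfl

lemma LA_iff {V : Type*} (G : SimpleGraph V) (C : Set V) (S : Set V) (l : List V) :
    LA G C S l ↔ ∀ i (hi : i < l.length),
      (gnbr G C (l.get ⟨i, hi⟩) \
        (S ∪ ⋃ j : Fin i, gnbr G C (l.get ⟨j, lt_trans j.2 hi⟩))).Nonempty := by
  induction l generalizing S with
  | nil => simp [LA]
  | cons v t ih =>
    simp only [LA, ih]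
    constructor
    · rintro ⟨h0, h1⟩ i hi
      match i with
      | 0 => simpa using h0
      | (k+1) =>
        have hk : k < t.length := Nat.succ_lt_succ_iff.mp hi
        rw [union_shift G C S v t k hk hi]
        exact h1 k hk
    · intro h
      refine ⟨by simpa using h 0 (Nat.succ_pos _), fun k hk => ?_⟩
      have := h (k+1) (Nat.succ_lt_succ hk)
      rwa [union_shift G C S v t k hk (Nat.succ_lt_succ hk)] at this

lemma legal_iff {V : Type*} (G : SimpleGraph V) (C : Set V) (l : List V) :
    Legal G C l ↔ l.Nodup ∧ ∀ v t, l = v :: t → LA G C (gnbr G C v) t := by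
  constructor
  · rintro ⟨hnd, h⟩
    refine ⟨hnd, fun v t hl => ?_⟩
    subst hl
    rw [LA_iff]
    intro k hk
    have hi : k + 1 < (v :: t).length := Nat.succ_lt_succ hk
    have := h (k+1) hi (Nat.succ_pos _)
    have e : (⋃ j : Fin (k+1), gnbr G C ((v :: t).get ⟨j, lt_trans j.2 hi⟩))
        = gnbr G C v ∪ ⋃ j : Fin k, gnbr G C (t.get ⟨j, lt_trans j.2 hk⟩) := by
      rw [iUnion_fin_succ]; rfl
    rw [e] at this
    exact this
  · rintro ⟨hnd, h⟩
    refine ⟨hnd, fun i hi hpos => ?_⟩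
    match l, i with
    | v :: t, (k+1) =>
      have hk : k < t.length := Nat.succ_lt_succ_iff.mp hi
      have := (LA_iff G C (gnbr G C v) t).mp (h v t rfl) k hk
      have e : (⋃ j : Fin (k+1), gnbr G C ((v :: t).get ⟨j, lt_trans j.2 hi⟩))
          = gnbr G C v ∪ ⋃ j : Fin k, gnbr G C (t.get ⟨j, lt_trans j.2 hk⟩) := by
        rw [iUnion_fin_succ]; rfl
      rw [e]
      exact this

/-- When every `gnbr` is nonempty, legality is equivalent to `LA ∅`. -/
lemma legal_iff' {V : Type*} (G : SimpleGraph V) (C : Set V)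
    (hne : ∀ v, (gnbr G C v).Nonempty) (l : List V) :
    Legal G C l ↔ l.Nodup ∧ LA G C ∅ l := by
  rw [legal_iff]
  refine and_congr_right fun _ => ?_
  constructor
  · intro h
    match l with
    | [] => trivial
    | v :: t =>
      refine ⟨by simpa using hne v, ?_⟩
      exact LA_anti (by simp) (h v t rfl)
  · intro h v t hl
    subst hl
    exact LA_anti (by simp) h.2

lemma legal_nil {V : Type*} (G : SimpleGraph V) (C : Set V) : Legal G C [] :=
  ⟨List.nodup_nil, fun i hi _ => absurd hi (by simp)⟩

lemma grundy_achieved {V : Type*} [Fintype V] (G : SimpleGraph V) (C : Set V) :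
    ∃ l : List V, Legal G C l ∧ l.length = grundy G C := by
  have hbdd : BddAbove {k | ∃ l : List V, Legal G C l ∧ l.length = k} := by
    classical
    refine ⟨Fintype.card V, fun k hk => ?_⟩
    obtain ⟨l, hl, rfl⟩ := hk
    exact hl.1.length_le_card
  have hne : {k | ∃ l : List V, Legal G C l ∧ l.length = k}.Nonempty :=
    ⟨0, [], legal_nil G C, rfl⟩
  exact Nat.sSup_mem hne hbdd

lemma le_grundy {V : Type*} [Fintype V] {G : SimpleGraph V} {C : Set V} {l : List V}
    (h : Legal G C l) : l.length ≤ grundy G C := by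
  have hbdd : BddAbove {k | ∃ l : List V, Legal G C l ∧ l.length = k} := by
    classical
    refine ⟨Fintype.card V, fun k hk => ?_⟩
    obtain ⟨l, hl, rfl⟩ := hk
    exact hl.1.length_le_card
  exact le_csSup hbdd ⟨l, h, rfl⟩

section Sum

variable {V₁ V₂ : Type*} (G₁ : SimpleGraph V₁) (G₂ : SimpleGraph V₂) (C : Set (V₁ ⊕ V₂))

lemma gnbr_inl (a : V₁) :
    gnbr (G₁ ⊕g G₂) C (Sum.inl a) = Sum.inl '' gnbr G₁ {x | Sum.inl x ∈ C} a := by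
  ext u
  cases u with
  | inl b => simp [gnbr]
  | inr b => simp [gnbr]

lemma gnbr_inr (a : V₂) :
    gnbr (G₁ ⊕g G₂) C (Sum.inr a) = Sum.inr '' gnbr G₂ {x | Sum.inr x ∈ C} a := by
  ext u
  cases u with
  | inl b => simp [gnbr]
  | inr b => simp [gnbr]

lemma LA_map_inl (S : Set V₁) (l : List V₁) (h : LA G₁ {x | Sum.inl x ∈ C} S l) :
    LA (G₁ ⊕g G₂) C (Sum.inl '' S) (l.map Sum.inl) := by
  induction l generalizing S with
  | nil => trivial
  | cons v t ih =>
    obtain ⟨⟨u, hu1, hu2⟩, h2⟩ := h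
    refine ⟨⟨Sum.inl u, ?_, ?_⟩, ?_⟩
    · rw [gnbr_inl]; exact ⟨u, hu1, rfl⟩
    · rintro ⟨x, hx, hxe⟩
      exact hu2 ((Sum.inl_injective hxe) ▸ hx)
    · rw [gnbr_inl, ← Set.image_union]
      exact ih _ h2

lemma LA_map_inr (S : Set V₂) (T : Set (V₁ ⊕ V₂)) (hT : T ⊆ Set.range Sum.inl)
    (l : List V₂) (h : LA G₂ {x | Sum.inr x ∈ C} S l) :
    LA (G₁ ⊕g G₂) C (T ∪ Sum.inr '' S) (l.map Sum.inr) := by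
  induction l generalizing S with
  | nil => trivial
  | cons v t ih =>
    obtain ⟨⟨u, hu1, hu2⟩, h2⟩ := h
    refine ⟨⟨Sum.inr u, ?_, ?_⟩, ?_⟩
    · rw [gnbr_inr]; exact ⟨u, hu1, rfl⟩
    · rintro (hc | ⟨x, hx, hxe⟩)
      · obtain ⟨y, hy⟩ := hT hc
        exact Sum.inl_ne_inr hy
      · exact hu2 ((Sum.inr_injective hxe) ▸ hx)
    · have := ih _ h2
      rw [gnbr_inr, Set.union_assoc, ← Set.image_union]
      exact this

/-- Union of the neighborhoods of a list. -/
def bigU {V : Type*} (G : SimpleGraph V) (C : Set V) (l : List V) : Set V :=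
  ⋃ v ∈ l, gnbr G C v

lemma bigU_cons {V : Type*} (G : SimpleGraph V) (C : Set V) (v : V) (t : List V) :
    bigU G C (v :: t) = gnbr G C v ∪ bigU G C t := by
  ext x; simp [bigU, List.mem_cons, or_and_right, exists_or]

lemma LA_append {V : Type*} {G : SimpleGraph V} {C : Set V} {S : Set V} {l₁ l₂ : List V}
    (h1 : LA G C S l₁) (h2 : LA G C (S ∪ bigU G C l₁) l₂) : LA G C S (l₁ ++ l₂) := by
  induction l₁ generalizing S with
  | nil =>
    simpa using LA_anti (by simp [bigU]) h2
  | cons v t ih =>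
    refine ⟨h1.1, ih h1.2 (LA_anti ?_ h2)⟩
    rw [bigU_cons]
    intro x hx
    simp only [Set.mem_union] at hx ⊢
    tauto

lemma bigU_map_inl_subset (l : List V₁) :
    bigU (G₁ ⊕g G₂) C (l.map Sum.inl) ⊆ Set.range Sum.inl := by
  intro x hx
  simp only [bigU, Set.mem_iUnion] at hx
  obtain ⟨v, hv, hxv⟩ := hx
  obtain ⟨a, _, rfl⟩ := List.mem_map.mp hv
  rw [gnbr_inl] at hxv
  obtain ⟨b, _, rfl⟩ := hxv
  exact ⟨b, rfl⟩

lemma LA_filter_left (S : Set (V₁ ⊕ V₂)) (L : List (V₁ ⊕ V₂))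
    (h : LA (G₁ ⊕g G₂) C S L) :
    LA G₁ {x | Sum.inl x ∈ C} (Sum.inl ⁻¹' S) (L.filterMap Sum.getLeft?) := by
  induction L generalizing S with
  | nil => trivial
  | cons w T ih =>
    cases w with
    | inl v =>
      obtain ⟨⟨u, hu1, hu2⟩, h2⟩ := h
      rw [gnbr_inl] at hu1
      obtain ⟨a, ha, rfl⟩ := hu1
      rw [List.filterMap_cons]
      simp only [Sum.getLeft?]
      refine ⟨⟨a, ha, hu2⟩, ?_⟩
      have := ih _ h2
      rwa [Set.preimage_union, gnbr_inl, Set.preimage_image_eq _ Sum.inl_injective] at this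
    | inr v =>
      rw [List.filterMap_cons]
      simp only [Sum.getLeft?]
      have := ih _ h.2
      have e : Sum.inl ⁻¹' (S ∪ gnbr (G₁ ⊕g G₂) C (Sum.inr v)) = Sum.inl ⁻¹' S := by
        rw [Set.preimage_union, gnbr_inr]
        have : (Sum.inl ⁻¹' (Sum.inr '' gnbr G₂ {x | Sum.inr x ∈ C} v) : Set V₁) = ∅ := by
          ext x; simp
        rw [this, Set.union_empty]
      rwa [e] at this

lemma LA_filter_right (S : Set (V₁ ⊕ V₂)) (L : List (V₁ ⊕ V₂))
    (h : LA (G₁ ⊕g G₂) C S L) :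
    LA G₂ {x | Sum.inr x ∈ C} (Sum.inr ⁻¹' S) (L.filterMap Sum.getRight?) := by
  induction L generalizing S with
  | nil => trivial
  | cons w T ih =>
    cases w with
    | inr v =>
      obtain ⟨⟨u, hu1, hu2⟩, h2⟩ := h
      rw [gnbr_inr] at hu1
      obtain ⟨a, ha, rfl⟩ := hu1
      rw [List.filterMap_cons]
      simp only [Sum.getRight?]
      refine ⟨⟨a, ha, hu2⟩, ?_⟩
      have := ih _ h2
      rwa [Set.preimage_union, gnbr_inr, Set.preimage_image_eq _ Sum.inr_injective] at this
    | inl v =>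
      rw [List.filterMap_cons]
      simp only [Sum.getRight?]
      have := ih _ h.2
      have e : Sum.inr ⁻¹' (S ∪ gnbr (G₁ ⊕g G₂) C (Sum.inl v)) = Sum.inr ⁻¹' S := by
        rw [Set.preimage_union, gnbr_inl]
        have : (Sum.inr ⁻¹' (Sum.inl '' gnbr G₁ {x | Sum.inl x ∈ C} v) : Set V₂) = ∅ := by
          ext x; simp
        rw [this, Set.union_empty]
      rwa [e] at this

lemma length_filter_split (L : List (V₁ ⊕ V₂)) :
    (L.filterMap Sum.getLeft?).length + (L.filterMap Sum.getRight?).length = L.length := by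
  induction L with
  | nil => rfl
  | cons w T ih =>
    cases w with
    | inl v => simp [List.filterMap_cons, Sum.getLeft?, Sum.getRight?]; omega
    | inr v => simp [List.filterMap_cons, Sum.getLeft?, Sum.getRight?]; omega

end Sum

theorem stmt4 {V₁ V₂ : Type*} [Fintype V₁] [Fintype V₂]
    (G₁ : SimpleGraph V₁) (G₂ : SimpleGraph V₂) (C : Set (V₁ ⊕ V₂))
    (hiso : ∀ v ∉ C, ∃ u, (G₁ ⊕g G₂).Adj v u) :
    grundy (G₁ ⊕g G₂) C =
      grundy G₁ {a | Sum.inl a ∈ C} + grundy G₂ {b | Sum.inr b ∈ C} := by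
  classical
  set C₁ : Set V₁ := {a | Sum.inl a ∈ C} with hC₁
  set C₂ : Set V₂ := {b | Sum.inr b ∈ C} with hC₂
  have hne : ∀ v, (gnbr (G₁ ⊕g G₂) C v).Nonempty := by
    intro v
    by_cases hv : v ∈ C
    · exact ⟨v, Or.inr ⟨hv, rfl⟩⟩
    · obtain ⟨u, hu⟩ := hiso v hv
      exact ⟨u, Or.inl hu⟩
  have hne₁ : ∀ a, (gnbr G₁ C₁ a).Nonempty := by
    intro a
    obtain ⟨u, hu⟩ := hne (Sum.inl a)
    rw [gnbr_inl] at hu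
    obtain ⟨b, hb, _⟩ := hu
    exact ⟨b, hb⟩
  have hne₂ : ∀ b, (gnbr G₂ C₂ b).Nonempty := by
    intro b
    obtain ⟨u, hu⟩ := hne (Sum.inr b)
    rw [gnbr_inr] at hu
    obtain ⟨c, hc, _⟩ := hu
    exact ⟨c, hc⟩
  apply le_antisymm
  · -- ≤ : split an optimal legal sequence of the sum
    obtain ⟨L, hL, hLlen⟩ := grundy_achieved (G₁ ⊕g G₂) C
    rw [← hLlen, ← length_filter_split L]
    obtain ⟨hnd, hLA⟩ := (legal_iff' _ _ hne L).mp hL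
    have h₁ : Legal G₁ C₁ (L.filterMap Sum.getLeft?) := by
      rw [legal_iff' _ _ hne₁]
      refine ⟨hnd.filterMap ?_, ?_⟩
      · intro a a' b hb hb'
        cases a <;> cases a' <;> simp_all [Sum.getLeft?]
      · have := LA_filter_left G₁ G₂ C ∅ L hLA
        simpa using this
    have h₂ : Legal G₂ C₂ (L.filterMap Sum.getRight?) := by
      rw [legal_iff' _ _ hne₂]
      refine ⟨hnd.filterMap ?_, ?_⟩
      · intro a a' b hb hb'
        cases a <;> cases a' <;> simp_all [Sum.getRight?]
      · have := LA_filter_right G₁ G₂ C ∅ L hLA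
        simpa using this
    exact Nat.add_le_add (le_grundy h₁) (le_grundy h₂)
  · -- ≥ : concatenate optimal legal sequences
    obtain ⟨l₁, hl₁, e₁⟩ := grundy_achieved G₁ C₁
    obtain ⟨l₂, hl₂, e₂⟩ := grundy_achieved G₂ C₂
    rw [← e₁, ← e₂]
    obtain ⟨hnd₁, hLA₁⟩ := (legal_iff' _ _ hne₁ l₁).mp hl₁
    obtain ⟨hnd₂, hLA₂⟩ := (legal_iff' _ _ hne₂ l₂).mp hl₂
    have hLegal : Legal (G₁ ⊕g G₂) C (l₁.map Sum.inl ++ l₂.map Sum.inr) := by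
      rw [legal_iff' _ _ hne]
      constructor
      · refine (hnd₁.map Sum.inl_injective).append (hnd₂.map Sum.inr_injective) ?_
        intro x hx hx'
        obtain ⟨a, _, rfl⟩ := List.mem_map.mp hx
        obtain ⟨b, _, hb⟩ := List.mem_map.mp hx'
        exact Sum.inl_ne_inr hb.symm
      · refine LA_append ?_ ?_
        · have := LA_map_inl G₁ G₂ C ∅ l₁ hLA₁
          simpa using this
        · have := LA_map_inr G₁ G₂ C ∅ (bigU (G₁ ⊕g G₂) C (l₁.map Sum.inl))
            (bigU_map_inl_subset G₁ G₂ C l₁) l₂ hLA₂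
          refine LA_anti ?_ this
          simp
    have := le_grundy hLegal
    simpa using this
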